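/- arXiv:1105.4062 — 4 statements merged into one kernel-verified Lean document; each statement's English description precedes it below -/
import Mathlib

section
/- For integers d ≥ 3 and n ≥ 1, setting λ = (d−2)/2, the integral J := ∫₀^{π/2} θ^{−(d−2)/2} (sin θ)^{d−2} (cos(θ/2))^{2n} dθ satisfies J ≤ 2^{d/2 − 1} B(d/4, (2n + d − 1)/2), where B is the Beta function. -/
open Real

/-- The real Beta function `B(a,b) = Γ(a)Γ(b)/Γ(a+b)`. -/
noncomputable def realBeta (a b : ℝ) : ℝ := Real.Gamma a * Real.Gamma b / Real.Gamma (a + b)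

open MeasureTheory Set intervalIntegral
open scoped Interval

lemma kib_complex_eq {a b : ℝ} (x : ℝ) (hx : 0 ≤ x) (hx1 : x ≤ 1) :
    ((x ^ (a-1) * (1-x) ^ (b-1) : ℝ) : ℂ)
      = (x : ℂ) ^ ((a:ℂ) - 1) * (1 - (x : ℂ)) ^ ((b:ℂ) - 1) := by
  rw [Complex.ofReal_mul, Complex.ofReal_cpow hx, Complex.ofReal_cpow (by linarith)]
  push_cast
  ring_nf

lemma kib_integrable {a b : ℝ} (ha : 0 < a) (hb : 0 < b) :
    IntervalIntegrable (fun x : ℝ => x ^ (a-1) * (1-x) ^ (b-1)) volume 0 1 := by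
  have h := Complex.betaIntegral_convergent (u := a) (v := b) (by simpa) (by simpa)
  rw [intervalIntegrable_iff] at h ⊢
  refine (h.re).congr ?_
  rw [uIoc_of_le zero_le_one] at *
  filter_upwards [ae_restrict_mem measurableSet_Ioc] with x hx
  rw [← kib_complex_eq x hx.1.le hx.2]
  simp

lemma kib_beta_eq {a b : ℝ} (ha : 0 < a) (hb : 0 < b) :
    ∫ x in (0:ℝ)..1, x ^ (a-1) * (1-x) ^ (b-1)
      = Real.Gamma a * Real.Gamma b / Real.Gamma (a + b) := by
  have hG : Complex.Gamma a * Complex.Gamma b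
      = Complex.Gamma ((a:ℂ) + b) * Complex.betaIntegral a b :=
    Complex.Gamma_mul_Gamma_eq_betaIntegral (by simpa) (by simpa)
  have hbeta : Complex.betaIntegral a b
      = ((∫ x in (0:ℝ)..1, x ^ (a-1) * (1-x) ^ (b-1) : ℝ) : ℂ) := by
    rw [Complex.betaIntegral, ← intervalIntegral.integral_ofReal]
    rw [intervalIntegral.integral_of_le zero_le_one, intervalIntegral.integral_of_le zero_le_one]
    refine setIntegral_congr_fun measurableSet_Ioc fun x hx => ?_
    exact (kib_complex_eq x hx.1.le hx.2).symm
  have hGpos : 0 < Real.Gamma (a + b) := Real.Gamma_pos_of_pos (by linarith)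
  have : ((Real.Gamma a * Real.Gamma b : ℝ) : ℂ)
      = ((Real.Gamma (a+b) * ∫ x in (0:ℝ)..1, x ^ (a-1) * (1-x) ^ (b-1) : ℝ) : ℂ) := by
    push_cast
    rw [Complex.Gamma_ofReal, Complex.Gamma_ofReal, ← Complex.ofReal_add, Complex.Gamma_ofReal]
      at *
    rw [hG, hbeta]
  have h2 := Complex.ofReal_injective this
  field_simp
  linarith [h2]


lemma kib_pointwise {p q : ℝ} (hp : 0 < p) (hq : 0 < q) {t : ℝ}
    (ht : t ∈ Icc (0:ℝ) (π/2)) :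
    Real.sin t ^ p * Real.cos t ^ q
      = (2 * Real.sin t ^ 1 * Real.cos t) •
        ((1/2 : ℝ) * ((Real.sin t ^ 2) ^ ((p-1)/2) * (1 - Real.sin t ^ 2) ^ ((q-1)/2))) := by
  have hs : 0 ≤ Real.sin t := Real.sin_nonneg_of_nonneg_of_le_pi ht.1 (by linarith [ht.2, pi_pos])
  have hc : 0 ≤ Real.cos t := Real.cos_nonneg_of_mem_Icc ⟨by linarith [ht.1, pi_pos], ht.2⟩
  have h1 : (1 : ℝ) - Real.sin t ^ 2 = Real.cos t ^ 2 := by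
    have := Real.sin_sq_add_cos_sq t; linarith
  rw [h1]
  have e1 : (Real.sin t ^ 2) ^ ((p-1)/2) = Real.sin t ^ (p - 1) := by
    rw [← Real.rpow_natCast (Real.sin t) 2, ← Real.rpow_mul hs]
    ring_nf
  have e2 : (Real.cos t ^ 2) ^ ((q-1)/2) = Real.cos t ^ (q - 1) := by
    rw [← Real.rpow_natCast (Real.cos t) 2, ← Real.rpow_mul hc]
    ring_nf
  have e3 : Real.sin t ^ p = Real.sin t ^ (1:ℝ) * Real.sin t ^ (p - 1) := by
    rw [← Real.rpow_add' hs (by norm_num; linarith)]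
    ring_nf
  have e4 : Real.cos t ^ q = Real.cos t ^ (1:ℝ) * Real.cos t ^ (q - 1) := by
    rw [← Real.rpow_add' hc (by norm_num; linarith)]
    ring_nf
  rw [e1, e2, e3, e4, Real.rpow_one, Real.rpow_one, smul_eq_mul]
  ring

lemma kib_sin_cos {p q : ℝ} (hp : 0 < p) (hq : 0 < q) :
    ∫ t in (0:ℝ)..(π/2), Real.sin t ^ p * Real.cos t ^ q
      = (1/2) * (Real.Gamma ((p+1)/2) * Real.Gamma ((q+1)/2)
          / Real.Gamma ((p+1)/2 + (q+1)/2)) := by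
  have ha : 0 < (p+1)/2 := by linarith
  have hb : 0 < (q+1)/2 := by linarith
  set g : ℝ → ℝ := fun u => (1/2 : ℝ) * (u ^ ((p+1)/2 - 1) * (1-u) ^ ((q+1)/2 - 1)) with hg
  have hpe : (p+1)/2 - 1 = (p-1)/2 := by ring
  have hqe : (q+1)/2 - 1 = (q-1)/2 := by ring
  have hgi : IntervalIntegrable g volume 0 1 := (kib_integrable ha hb).const_mul _
  have key : (∫ t in (0:ℝ)..(π/2),
      (2 * Real.sin t ^ 1 * Real.cos t) • g (Real.sin t ^ 2)) = ∫ u in (0:ℝ)..1, g u := by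
    have := intervalIntegral.integral_comp_smul_deriv''' (a := 0) (b := π/2)
      (f := fun t => Real.sin t ^ 2) (f' := fun t => 2 * Real.sin t ^ 1 * Real.cos t)
      (g := g) ?_ ?_ ?_ ?_ ?_
    · simpa using this
    · exact (Real.continuous_sin.pow 2).continuousOn
    · intro x _
      exact ((Real.hasDerivAt_sin x).pow 2).hasDerivWithinAt
    · have himg : (fun t => Real.sin t ^ 2) '' Ioo (min 0 (π/2)) (max 0 (π/2)) ⊆ Ioo (0:ℝ) 1 := by
        rintro _ ⟨t, ht, rfl⟩
        rw [min_eq_left (by positivity), max_eq_right (by positivity)] at ht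
        have hs : 0 < Real.sin t := Real.sin_pos_of_pos_of_lt_pi ht.1 (by linarith [ht.2, pi_pos])
        have hc : 0 < Real.cos t := Real.cos_pos_of_mem_Ioo ⟨by linarith [ht.1, pi_pos], ht.2⟩
        have h1 := Real.sin_sq_add_cos_sq t
        show Real.sin t ^ 2 ∈ Ioo (0:ℝ) 1
        exact ⟨by positivity, by nlinarith [pow_pos hc 2]⟩
      refine ContinuousOn.mono ?_ himg
      refine continuous_const.continuousOn.mul (ContinuousOn.mul ?_ ?_)
      · exact fun x hx => ((Real.continuousAt_rpow_const x _ (Or.inl hx.1.ne')).continuousWithinAt)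
      · exact fun x hx => (((Real.continuousAt_rpow_const (1-x) _
          (Or.inl (by simp only [ne_eq, sub_eq_zero]; exact fun h => absurd h.symm hx.2.ne))).comp
          (by fun_prop)).continuousWithinAt)
    · have himg : (fun t => Real.sin t ^ 2) '' [[0, π/2]] ⊆ Icc (0:ℝ) 1 := by
        rintro _ ⟨t, _, rfl⟩
        exact ⟨by positivity, Real.sin_sq_le_one t⟩
      refine MeasureTheory.IntegrableOn.mono_set ?_ himg
      rw [intervalIntegrable_iff, uIoc_of_le zero_le_one] at hgi
      rw [integrableOn_Icc_iff_integrableOn_Ioc]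
      exact hgi
    · have hcont : Continuous fun t => Real.sin t ^ p * Real.cos t ^ q := by
        exact (Real.continuous_sin.rpow_const fun x => Or.inr hp.le).mul
          (Real.continuous_cos.rpow_const fun x => Or.inr hq.le)
      rw [uIcc_of_le (by positivity)]
      refine MeasureTheory.IntegrableOn.congr_fun (hcont.integrableOn_Icc) ?_ measurableSet_Icc
      intro t ht
      simpa [hg, hpe, hqe] using kib_pointwise hp hq ht
  have lhs_eq : (∫ t in (0:ℝ)..(π/2), Real.sin t ^ p * Real.cos t ^ q)
      = ∫ t in (0:ℝ)..(π/2), (2 * Real.sin t ^ 1 * Real.cos t) • g (Real.sin t ^ 2) := by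
    refine intervalIntegral.integral_congr fun t ht => ?_
    rw [uIcc_of_le (by positivity)] at ht
    simpa [hg, hpe, hqe] using kib_pointwise hp hq ht
  rw [lhs_eq, key, hg]
  rw [intervalIntegral.integral_const_mul, kib_beta_eq ha hb]

/-- `∫₀^{π/2} θ^{-(d-2)/2} sin^{d-2} θ cos^{2n}(θ/2) dθ ≤ 2^{d/2-1} B(d/4, (2n+d-1)/2)`. -/
theorem kernel_integral_beta_bound (d n : ℕ) (hd : 3 ≤ d) (hn : 1 ≤ n) :
    (∫ θ in (0:ℝ)..(π/2),
        θ ^ (-(((d:ℝ) - 2)/2)) * Real.sin θ ^ (d - 2) * Real.cos (θ/2) ^ (2*n)) ≤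
      (2:ℝ) ^ ((d:ℝ)/2 - 1) * realBeta ((d:ℝ)/4) ((2*(n:ℝ) + (d:ℝ) - 1)/2) := by
  have hd3 : (3:ℝ) ≤ (d:ℝ) := by exact_mod_cast hd
  have hd2 : 2 ≤ d := by omega
  have hn1 : (1:ℝ) ≤ (n:ℝ) := by exact_mod_cast hn
  set lam : ℝ := ((d:ℝ) - 2)/2 with hlam_def
  have hlam : 0 < lam := by rw [hlam_def]; linarith
  set q : ℝ := 2*(n:ℝ) + (d:ℝ) - 2 with hq_def
  have hq : 0 < q := by rw [hq_def]; linarith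
  have hcast : ((d - 2 : ℕ) : ℝ) = (d:ℝ) - 2 := by
    rw [Nat.cast_sub hd2]; norm_num
  have hcastq : ((d - 2 + 2*n : ℕ) : ℝ) = q := by
    rw [Nat.cast_add, Nat.cast_sub hd2]; push_cast; rw [hq_def]; ring
  set H : ℝ → ℝ := fun θ => 2 ^ lam * (Real.sin (θ/2) ^ lam * Real.cos (θ/2) ^ q) with hH_def
  -- pointwise bound
  have hpt : ∀ θ ∈ Icc (0:ℝ) (π/2),
      θ ^ (-lam) * Real.sin θ ^ (d - 2) * Real.cos (θ/2) ^ (2*n) ≤ H θ := by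
    intro θ hθ
    rcases eq_or_lt_of_le hθ.1 with h0 | h0
    · rw [← h0]
      simp [hH_def, Real.zero_rpow hlam.ne', Real.zero_rpow (neg_ne_zero.mpr hlam.ne'),
        Nat.sub_ne_zero_of_lt (by omega : 2 < d)]
    · have hθ2 : 0 < θ/2 := by linarith
      have hθ2' : θ/2 < π/2 := by linarith [hθ.2, pi_pos]
      have hs : 0 < Real.sin (θ/2) :=
        Real.sin_pos_of_pos_of_lt_pi hθ2 (by linarith [pi_pos])
      have hc : 0 < Real.cos (θ/2) := Real.cos_pos_of_mem_Ioo ⟨by linarith [pi_pos], hθ2'⟩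
      have hsle : Real.sin (θ/2) ≤ θ/2 := Real.sin_le hθ2.le
      have hsin : Real.sin θ = 2 * Real.sin (θ/2) * Real.cos (θ/2) := by
        have h := Real.sin_two_mul (θ/2)
        rw [show 2*(θ/2) = θ by ring] at h
        exact h
      have h2 : Real.sin (θ/2) ^ (d - 2) = Real.sin (θ/2) ^ lam * Real.sin (θ/2) ^ lam := by
        rw [← Real.rpow_natCast (Real.sin (θ/2)) (d-2), ← Real.rpow_add hs, hcast, hlam_def]
        ring_nf
      have h3 : Real.cos (θ/2) ^ q
          = Real.cos (θ/2) ^ (d - 2) * Real.cos (θ/2) ^ (2*n) := by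
        rw [← pow_add, ← Real.rpow_natCast (Real.cos (θ/2)) (d-2+2*n), hcastq]
      have h4 : ((2:ℝ)) ^ (d - 2) = (2:ℝ) ^ ((d:ℝ) - 2) := by
        rw [← Real.rpow_natCast (2:ℝ) (d-2), hcast]
      have hL : θ ^ (-lam) * Real.sin θ ^ (d - 2) * Real.cos (θ/2) ^ (2*n)
          = (2:ℝ) ^ ((d:ℝ)-2) * ((θ ^ (-lam) * Real.sin (θ/2) ^ lam)
              * (Real.sin (θ/2) ^ lam * Real.cos (θ/2) ^ q)) := by
        rw [hsin, mul_pow, mul_pow, h4, h2, h3]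
        ring
      have hkey : θ ^ (-lam) * (θ/2) ^ lam = 2 ^ (-lam) := by
        rw [show θ/2 = θ * (2:ℝ)⁻¹ by ring,
          Real.mul_rpow h0.le (by norm_num), ← mul_assoc, ← Real.rpow_add h0,
          neg_add_cancel, Real.rpow_zero, one_mul, Real.inv_rpow (by norm_num),
          ← Real.rpow_neg (by norm_num)]
      have hmono : θ ^ (-lam) * Real.sin (θ/2) ^ lam ≤ 2 ^ (-lam) := by
        rw [← hkey]
        have := Real.rpow_le_rpow hs.le hsle hlam.le
        have hθn : (0:ℝ) ≤ θ ^ (-lam) := Real.rpow_nonneg h0.le _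
        nlinarith
      calc θ ^ (-lam) * Real.sin θ ^ (d - 2) * Real.cos (θ/2) ^ (2*n)
          = (2:ℝ) ^ ((d:ℝ)-2) * ((θ ^ (-lam) * Real.sin (θ/2) ^ lam)
              * (Real.sin (θ/2) ^ lam * Real.cos (θ/2) ^ q)) := hL
        _ ≤ (2:ℝ) ^ ((d:ℝ)-2) * ((2:ℝ) ^ (-lam)
              * (Real.sin (θ/2) ^ lam * Real.cos (θ/2) ^ q)) := by
            have hn1 : (0:ℝ) ≤ Real.sin (θ/2) ^ lam * Real.cos (θ/2) ^ q :=
              mul_nonneg (Real.rpow_nonneg hs.le _) (Real.rpow_nonneg hc.le _)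
            have h2n : (0:ℝ) ≤ (2:ℝ) ^ ((d:ℝ)-2) := Real.rpow_nonneg (by norm_num) _
            exact mul_le_mul_of_nonneg_left (mul_le_mul_of_nonneg_right hmono hn1) h2n
        _ = H θ := by
            rw [hH_def, ← mul_assoc, ← Real.rpow_add (by norm_num : (0:ℝ) < 2)]
            congr 2
            rw [hlam_def]; ring
  -- continuity / integrability of H
  have hF_cont : Continuous fun t => Real.sin t ^ lam * Real.cos t ^ q :=
    (Real.continuous_sin.rpow_const fun _ => Or.inr hlam.le).mul
      (Real.continuous_cos.rpow_const fun _ => Or.inr hq.le)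
  have hH_cont : Continuous H := by
    exact continuous_const.mul (hF_cont.comp (continuous_id.div_const 2))
  have hH_int : IntervalIntegrable H volume 0 (π/2) := hH_cont.intervalIntegrable _ _
  -- integrability of LHS
  have hL_int : IntervalIntegrable
      (fun θ => θ ^ (-lam) * Real.sin θ ^ (d - 2) * Real.cos (θ/2) ^ (2*n)) volume 0 (π/2) := by
    apply hH_int.mono_fun'
    · have : ContinuousOn
          (fun θ => θ ^ (-lam) * Real.sin θ ^ (d - 2) * Real.cos (θ/2) ^ (2*n))
          (Ι (0:ℝ) (π/2)) := by
        rw [uIoc_of_le (by positivity)]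
        refine ContinuousOn.mul (ContinuousOn.mul ?_ ?_) ?_
        · intro x hx
          exact (Real.continuousAt_rpow_const x _ (Or.inl hx.1.ne')).continuousWithinAt
        · exact (Real.continuous_sin.pow _).continuousOn
        · exact ((Real.continuous_cos.comp (continuous_id.div_const 2)).pow _).continuousOn
      exact this.aestronglyMeasurable measurableSet_uIoc
    · rw [uIoc_of_le (by positivity)]
      filter_upwards [ae_restrict_mem measurableSet_Ioc] with θ hθ
      have hθI : θ ∈ Icc (0:ℝ) (π/2) := Ioc_subset_Icc_self hθ
      have h1 := hpt θ hθI
      have hnn : 0 ≤ θ ^ (-lam) * Real.sin θ ^ (d - 2) * Real.cos (θ/2) ^ (2*n) := by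
        have hsn : 0 ≤ Real.sin θ := Real.sin_nonneg_of_nonneg_of_le_pi hθI.1
          (by linarith [hθI.2, pi_pos])
        have hcn : 0 ≤ Real.cos (θ/2) := Real.cos_nonneg_of_mem_Icc
          ⟨by linarith [hθI.1, pi_pos], by linarith [hθI.2, pi_pos]⟩
        have := Real.rpow_nonneg hθI.1 (-lam)
        positivity
      rw [Real.norm_eq_abs, abs_of_nonneg hnn]
      exact h1
  -- main inequality
  have hmain : (∫ θ in (0:ℝ)..(π/2),
      θ ^ (-lam) * Real.sin θ ^ (d - 2) * Real.cos (θ/2) ^ (2*n)) ≤ ∫ θ in (0:ℝ)..(π/2), H θ :=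
    intervalIntegral.integral_mono_on (by positivity) hL_int hH_int hpt
  -- compute/bound ∫ H
  have hsub : (∫ θ in (0:ℝ)..(π/2), Real.sin (θ/2) ^ lam * Real.cos (θ/2) ^ q)
      = (2:ℝ) • ∫ t in ((0:ℝ)/2)..((π/2)/2), Real.sin t ^ lam * Real.cos t ^ q := by
    exact intervalIntegral.integral_comp_div
      (f := fun t => Real.sin t ^ lam * Real.cos t ^ q) two_ne_zero
  have hF_nonneg : ∀ t ∈ Icc ((π/2)/2) (π/2), 0 ≤ Real.sin t ^ lam * Real.cos t ^ q := by
    intro t ht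
    have hsn : 0 ≤ Real.sin t := Real.sin_nonneg_of_nonneg_of_le_pi
      (by linarith [ht.1, pi_pos]) (by linarith [ht.2, pi_pos])
    have hcn : 0 ≤ Real.cos t := Real.cos_nonneg_of_mem_Icc
      ⟨by linarith [ht.1, pi_pos], ht.2⟩
    exact mul_nonneg (Real.rpow_nonneg hsn _) (Real.rpow_nonneg hcn _)
  have hext : (∫ t in ((0:ℝ)/2)..((π/2)/2), Real.sin t ^ lam * Real.cos t ^ q)
      ≤ ∫ t in (0:ℝ)..(π/2), Real.sin t ^ lam * Real.cos t ^ q := by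
    have hadd := intervalIntegral.integral_add_adjacent_intervals
      (μ := MeasureTheory.volume) (a := (0:ℝ)) (b := (π/2)/2) (c := π/2)
      (hF_cont.intervalIntegrable _ _) (hF_cont.intervalIntegrable _ _)
    have h2 : 0 ≤ ∫ t in ((π/2)/2)..(π/2), Real.sin t ^ lam * Real.cos t ^ q :=
      intervalIntegral.integral_nonneg (by linarith [pi_pos]) hF_nonneg
    rw [show (0:ℝ)/2 = 0 by norm_num]
    linarith
  have hval : (∫ t in (0:ℝ)..(π/2), Real.sin t ^ lam * Real.cos t ^ q)
      = (1/2) * (Real.Gamma ((lam+1)/2) * Real.Gamma ((q+1)/2)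
          / Real.Gamma ((lam+1)/2 + (q+1)/2)) := kib_sin_cos hlam hq
  have hBeta : Real.Gamma ((lam+1)/2) * Real.Gamma ((q+1)/2)
      / Real.Gamma ((lam+1)/2 + (q+1)/2)
      = realBeta ((d:ℝ)/4) ((2*(n:ℝ) + (d:ℝ) - 1)/2) := by
    rw [realBeta]
    have e1 : (lam+1)/2 = (d:ℝ)/4 := by rw [hlam_def]; ring
    have e2 : (q+1)/2 = (2*(n:ℝ) + (d:ℝ) - 1)/2 := by rw [hq_def]; ring
    rw [e1, e2]
  have hBeta_nonneg : 0 ≤ realBeta ((d:ℝ)/4) ((2*(n:ℝ) + (d:ℝ) - 1)/2) := by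
    rw [realBeta]
    have g1 := Real.Gamma_pos_of_pos (show (0:ℝ) < (d:ℝ)/4 by linarith)
    have g2 := Real.Gamma_pos_of_pos (show (0:ℝ) < (2*(n:ℝ) + (d:ℝ) - 1)/2 by linarith)
    have g3 := Real.Gamma_pos_of_pos
      (show (0:ℝ) < (d:ℝ)/4 + (2*(n:ℝ) + (d:ℝ) - 1)/2 by linarith)
    positivity
  have hHint_eq : (∫ θ in (0:ℝ)..(π/2), H θ)
      = 2 ^ lam * ∫ θ in (0:ℝ)..(π/2), Real.sin (θ/2) ^ lam * Real.cos (θ/2) ^ q := by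
    rw [hH_def]
    exact intervalIntegral.integral_const_mul _ _
  have h2lam : (0:ℝ) ≤ 2 ^ lam := Real.rpow_nonneg (by norm_num) _
  have hfinal : (∫ θ in (0:ℝ)..(π/2), H θ)
      ≤ (2:ℝ) ^ ((d:ℝ)/2 - 1) * realBeta ((d:ℝ)/4) ((2*(n:ℝ) + (d:ℝ) - 1)/2) := by
    rw [hHint_eq, hsub]
    have hexp : (2:ℝ) ^ lam = (2:ℝ) ^ ((d:ℝ)/2 - 1) := by
      congr 1
      rw [hlam_def]; ring
    rw [hexp]
    have : (2:ℝ) • (∫ t in ((0:ℝ)/2)..((π/2)/2), Real.sin t ^ lam * Real.cos t ^ q)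
        ≤ realBeta ((d:ℝ)/4) ((2*(n:ℝ) + (d:ℝ) - 1)/2) := by
      rw [smul_eq_mul]
      have := hext
      rw [hval, hBeta] at this
      linarith
    have h2' : (0:ℝ) ≤ (2:ℝ) ^ ((d:ℝ)/2 - 1) := Real.rpow_nonneg (by norm_num) _
    exact mul_le_mul_of_nonneg_left this h2'
  exact le_trans hmain hfinal
end

section
/- For every integer d ≥ 3 there is a constant C(d) > 0 such that for all n ≥ 1, ∫₀^π θ^{−λ} v_n(θ) (sin θ)^{2λ} dθ ≤ C(d) n^{λ/2}, where λ = (d−2)/2 and v_n(θ) = (cos(θ/2))^{2n} / I_{n,d} with I_{n,d} = ∫₀^π (cos(t/2))^{2n} (sin t)^{2λ} dt. -/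
/-!
Since `sin θ ≤ θ`, AM–GM absorbs the singular weight: for every `p > 0`,
`θ^{-λ} sin^{2λ} θ ≤ sin^λ θ ≤ (p sin^{2λ} θ + p⁻¹) / 2`, so the moment is at most
`p / 2 + J / (2 p I)` with `J = ∫₀^π cos^{2n}(θ/2) dθ` and `I = I_{n,d}`. Bernoulli's and Jordan's
inequalities give `J ≲ n^{-1/2}` (an arctangent integral) and `I ≳ n^{-(d-1)/2}` (the kernel is at
least `3/4` on `[0, n^{-1/2}]`), so `J / I ≲ n^λ`, and `p = n^{λ/2}` balances the two terms.
-/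

open Real Set MeasureTheory

lemma one_sub_pow_le_inv_one_add_mul (n : ℕ) {x : ℝ} (hx0 : 0 ≤ x) (hx1 : x ≤ 1) :
    (1 - x) ^ n ≤ (1 + n * x)⁻¹ := by
  rw [← one_div, le_div_iff₀ (by positivity)]
  calc (1 - x) ^ n * (1 + n * x) ≤ (1 - x) ^ n * (1 + x) ^ n := by
        gcongr
        exact one_add_mul_le_pow (by linarith) n
    _ = (1 - x ^ 2) ^ n := by rw [← mul_pow]; ring
    _ ≤ 1 := pow_le_one₀ (by nlinarith) (by nlinarith)

lemma cos_half_pow_le_inv_one_add (n : ℕ) {θ : ℝ} (h0 : 0 ≤ θ) (hπ : θ ≤ π) :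
    cos (θ / 2) ^ (2 * n) ≤ (1 + n * (θ / π) ^ 2)⁻¹ := by
  have hsin : θ / π ≤ sin (θ / 2) := by
    have := mul_le_sin (x := θ / 2) (by positivity) (by linarith)
    rwa [show 2 / π * (θ / 2) = θ / π by ring] at this
  calc cos (θ / 2) ^ (2 * n) = (1 - sin (θ / 2) ^ 2) ^ n := by rw [pow_mul, cos_sq']
    _ ≤ (1 + n * sin (θ / 2) ^ 2)⁻¹ :=
      one_sub_pow_le_inv_one_add_mul n (sq_nonneg _) (sin_sq_le_one _)
    _ ≤ (1 + n * (θ / π) ^ 2)⁻¹ := by gcongr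

lemma one_sub_mul_sq_div_four_le_cos_half_pow (n : ℕ) {θ : ℝ} (hθ : θ ^ 2 ≤ 4) :
    1 - n * θ ^ 2 / 4 ≤ cos (θ / 2) ^ (2 * n) := by
  have hcos : 1 - θ ^ 2 / 4 ≤ cos (θ / 2) ^ 2 := by
    have := sin_sq_le_sq (x := θ / 2)
    rw [cos_sq']
    linarith [show (θ / 2) ^ 2 = θ ^ 2 / 4 by ring]
  calc 1 - n * θ ^ 2 / 4 = 1 + n * (-(θ ^ 2 / 4)) := by ring
    _ ≤ (1 + -(θ ^ 2 / 4)) ^ n := one_add_mul_le_pow (by linarith) n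
    _ ≤ cos (θ / 2) ^ (2 * n) := by rw [pow_mul]; gcongr <;> linarith

lemma sqrt_mul_integral_cos_half_pow_le {n : ℕ} (hn : 0 < n) :
    √n * ∫ θ in (0:ℝ)..π, cos (θ / 2) ^ (2 * n) ≤ π ^ 2 / 2 := by
  have hs : 0 < √(n : ℝ) := by positivity
  set c := π / √n with hc
  have hc0 : 0 < c := by positivity
  have hbound : ∀ θ ∈ Icc 0 π, cos (θ / 2) ^ (2 * n) ≤ c ^ 2 * (c ^ 2 + θ ^ 2)⁻¹ := by
    rintro θ ⟨h0, hπ⟩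
    convert cos_half_pow_le_inv_one_add n h0 hπ using 1
    rw [hc, div_pow, sq_sqrt (Nat.cast_nonneg n)]
    field_simp
  calc √n * ∫ θ in (0:ℝ)..π, cos (θ / 2) ^ (2 * n)
      ≤ √n * ∫ θ in (0:ℝ)..π, c ^ 2 * (c ^ 2 + θ ^ 2)⁻¹ := by
        gcongr
        refine intervalIntegral.integral_mono_on pi_pos.le
          (Continuous.intervalIntegrable (by fun_prop) _ _) ?_ hbound
        refine Continuous.intervalIntegrable ?_ _ _
        exact continuous_const.mul ((by fun_prop : Continuous _).inv₀ fun θ => by positivity)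
    _ = π * arctan √n := by
        rw [intervalIntegral.integral_const_mul, integral_inv_sq_add_sq hc0.ne', hc]
        field_simp
        simp
    _ ≤ π ^ 2 / 2 := by
        have := arctan_lt_pi_div_two √n
        rw [sq]
        nlinarith [pi_pos]

lemma le_sqrt_pow_mul_integral_cos_half_pow_mul_sin_pow (k : ℕ) {n : ℕ} (hn : 0 < n) :
    3 / 4 * (2 / π) ^ k / (k + 1) ≤
      √n ^ (k + 1) * ∫ θ in (0:ℝ)..π, cos (θ / 2) ^ (2 * n) * sin θ ^ k := by
  have hs1 : 1 ≤ √(n : ℝ) := one_le_sqrt.mpr (by exact_mod_cast hn)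
  set a := (√n)⁻¹ with ha
  have ha0 : 0 < a := by positivity
  have ha1 : a ≤ 1 := inv_le_one_of_one_le₀ hs1
  have hna : n * a ^ 2 = 1 := by
    rw [ha, inv_pow, sq_sqrt (Nat.cast_nonneg n), mul_inv_cancel₀ (by positivity)]
  have hpt : ∀ θ ∈ Icc 0 a,
      3 / 4 * (2 / π) ^ k * θ ^ k ≤ cos (θ / 2) ^ (2 * n) * sin θ ^ k := by
    rintro θ ⟨h0, hθa⟩
    have hnθ : (n : ℝ) * θ ^ 2 ≤ 1 := hna ▸ by gcongr
    have hcos := one_sub_mul_sq_div_four_le_cos_half_pow n (θ := θ) (by nlinarith)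
    have hsin := mul_le_sin h0 (by linarith [pi_gt_three])
    rw [mul_assoc, ← mul_pow]
    gcongr
    · exact (even_two_mul n).pow_nonneg _
    · linarith
  have hint : Continuous fun θ => cos (θ / 2) ^ (2 * n) * sin θ ^ k := by fun_prop
  calc 3 / 4 * (2 / π) ^ k / (k + 1)
      = √n ^ (k + 1) * ∫ θ in (0:ℝ)..a, 3 / 4 * (2 / π) ^ k * θ ^ k := by
        rw [intervalIntegral.integral_const_mul, integral_pow, ha, zero_pow k.succ_ne_zero,
          sub_zero, inv_pow]
        field_simp
    _ ≤ √n ^ (k + 1) * ∫ θ in (0:ℝ)..a, cos (θ / 2) ^ (2 * n) * sin θ ^ k := by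
        gcongr
        exact intervalIntegral.integral_mono_on ha0.le
          (Continuous.intervalIntegrable (by fun_prop) _ _) (hint.intervalIntegrable _ _) hpt
    _ ≤ √n ^ (k + 1) * ∫ θ in (0:ℝ)..π, cos (θ / 2) ^ (2 * n) * sin θ ^ k := by
        gcongr
        refine intervalIntegral.integral_mono_interval le_rfl ha0.le
          (by linarith [pi_gt_three]) ?_ (hint.intervalIntegrable _ _)
        filter_upwards [ae_restrict_mem measurableSet_Ioc] with θ ⟨h0, hπ⟩
        have := sin_nonneg_of_nonneg_of_le_pi h0.le hπ
        rw [pow_mul]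
        positivity

lemma integral_cos_half_pow_mul_sin_pow_pos (k : ℕ) {n : ℕ} (hn : 0 < n) :
    0 < ∫ θ in (0:ℝ)..π, cos (θ / 2) ^ (2 * n) * sin θ ^ k :=
  pos_of_mul_pos_right ((by positivity : (0:ℝ) < 3 / 4 * (2 / π) ^ k / (k + 1)).trans_le
    (le_sqrt_pow_mul_integral_cos_half_pow_mul_sin_pow k hn)) (by positivity)

lemma integral_cos_half_pow_le_mul_integral_mul_sin_pow (k : ℕ) {n : ℕ} (hn : 0 < n) :
    ∫ θ in (0:ℝ)..π, cos (θ / 2) ^ (2 * n) ≤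
      π ^ 2 / 2 / (3 / 4 * (2 / π) ^ k / (k + 1)) * √n ^ k *
        ∫ θ in (0:ℝ)..π, cos (θ / 2) ^ (2 * n) * sin θ ^ k := by
  set c := 3 / 4 * (2 / π) ^ k / (k + 1)
  have hc : 0 < c := by positivity
  have hs : 0 < √(n : ℝ) := by positivity
  calc ∫ θ in (0:ℝ)..π, cos (θ / 2) ^ (2 * n)
      ≤ π ^ 2 / 2 / √n := by
        rw [le_div_iff₀ hs, mul_comm]
        exact sqrt_mul_integral_cos_half_pow_le hn
    _ = π ^ 2 / 2 / c * (c / √n) := by field_simp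
    _ ≤ π ^ 2 / 2 / c *
          (√n ^ (k + 1) * (∫ θ in (0:ℝ)..π, cos (θ / 2) ^ (2 * n) * sin θ ^ k) / √n) := by
        gcongr
        exact le_sqrt_pow_mul_integral_cos_half_pow_mul_sin_pow k hn
    _ = _ := by rw [pow_succ]; field_simp; ring

lemma rpow_neg_mul_sin_pow_le (k : ℕ) {θ : ℝ} (h0 : 0 < θ) (hπ : θ ≤ π) :
    θ ^ (-((k : ℝ) / 2)) * sin θ ^ k ≤ sin θ ^ ((k : ℝ) / 2) := by
  have hs := sin_nonneg_of_nonneg_of_le_pi h0.le hπ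
  have hsq : sin θ ^ k = sin θ ^ ((k : ℝ) / 2) * sin θ ^ ((k : ℝ) / 2) := by
    rw [← rpow_add_of_nonneg hs (by positivity) (by positivity), add_halves, rpow_natCast]
  have hratio : (sin θ / θ) ^ ((k : ℝ) / 2) ≤ 1 :=
    rpow_le_one (by positivity) ((div_le_one h0).mpr (sin_le h0.le)) (by positivity)
  calc θ ^ (-((k : ℝ) / 2)) * sin θ ^ k
      = (sin θ / θ) ^ ((k : ℝ) / 2) * sin θ ^ ((k : ℝ) / 2) := by
        rw [hsq, div_rpow hs h0.le, rpow_neg h0.le]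
        ring
    _ ≤ sin θ ^ ((k : ℝ) / 2) := mul_le_of_le_one_left (by positivity) hratio

lemma two_mul_le_mul_sq_add_inv {p : ℝ} (hp : 0 < p) (u : ℝ) : 2 * u ≤ p * u ^ 2 + p⁻¹ := by
  have : p * u ^ 2 + p⁻¹ - 2 * u = p⁻¹ * (p * u - 1) ^ 2 := by field_simp; ring
  nlinarith [mul_nonneg (inv_pos.mpr hp).le (sq_nonneg (p * u - 1))]

lemma rpow_neg_mul_sin_pow_le_mul_add_inv (k : ℕ) {θ : ℝ} (h0 : 0 < θ) (hπ : θ ≤ π) {p : ℝ}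
    (hp : 0 < p) : θ ^ (-((k : ℝ) / 2)) * sin θ ^ k ≤ (p * sin θ ^ k + p⁻¹) / 2 := by
  have hs := sin_nonneg_of_nonneg_of_le_pi h0.le hπ
  have hsq : (sin θ ^ ((k : ℝ) / 2)) ^ 2 = sin θ ^ k := by
    rw [← rpow_natCast, ← rpow_mul hs]
    norm_num
  have := two_mul_le_mul_sq_add_inv hp (sin θ ^ ((k : ℝ) / 2))
  rw [hsq] at this
  linarith [rpow_neg_mul_sin_pow_le k h0 hπ]

lemma intervalIntegrable_rpow_neg_mul_mul_sin_pow {f : ℝ → ℝ} (hf : Continuous f) (k : ℕ) :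
    IntervalIntegrable (fun θ => θ ^ (-((k : ℝ) / 2)) * f θ * sin θ ^ k) volume 0 π := by
  refine (hf.intervalIntegrable 0 π).mono_fun (by fun_prop) ?_
  rw [uIoc_of_le pi_pos.le]
  filter_upwards [ae_restrict_mem measurableSet_Ioc] with θ ⟨h0, hπ⟩
  have hs := sin_nonneg_of_nonneg_of_le_pi h0.le hπ
  have hle : θ ^ (-((k : ℝ) / 2)) * sin θ ^ k ≤ 1 :=
    (rpow_neg_mul_sin_pow_le k h0 hπ).trans (rpow_le_one hs (sin_le_one θ) (by positivity))
  rw [mul_right_comm, norm_mul, norm_of_nonneg (by positivity)]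
  exact mul_le_of_le_one_left (norm_nonneg _) hle

lemma integral_rpow_neg_mul_mul_sin_pow_le {f : ℝ → ℝ} (hf : Continuous f)
    (hf0 : ∀ θ ∈ Icc 0 π, 0 ≤ f θ) (k : ℕ) {p : ℝ} (hp : 0 < p) :
    ∫ θ in (0:ℝ)..π, θ ^ (-((k : ℝ) / 2)) * f θ * sin θ ^ k ≤
      (p * (∫ θ in (0:ℝ)..π, f θ * sin θ ^ k) + p⁻¹ * ∫ θ in (0:ℝ)..π, f θ) / 2 := by
  calc ∫ θ in (0:ℝ)..π, θ ^ (-((k : ℝ) / 2)) * f θ * sin θ ^ k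
      ≤ ∫ θ in (0:ℝ)..π, p / 2 * (f θ * sin θ ^ k) + p⁻¹ / 2 * f θ := by
        refine intervalIntegral.integral_mono_on_of_le_Ioo pi_pos.le
          (intervalIntegrable_rpow_neg_mul_mul_sin_pow hf k)
          (Continuous.intervalIntegrable (by fun_prop) _ _) fun θ ⟨h0, hπ⟩ => ?_
        have := mul_le_mul_of_nonneg_left (rpow_neg_mul_sin_pow_le_mul_add_inv k h0 hπ.le hp)
          (hf0 θ ⟨h0.le, hπ.le⟩)
        linarith
    _ = _ := by
        rw [intervalIntegral.integral_add (Continuous.intervalIntegrable (by fun_prop) _ _)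
          (Continuous.intervalIntegrable (by fun_prop) _ _), intervalIntegral.integral_const_mul,
          intervalIntegral.integral_const_mul]
        ring

/-- Lemma 2.1, first part: `∫₀^π θ^{-λ} v_n(θ) sin^{2λ} θ dθ ≤ C(d) n^{λ/2}`, where
`λ = (d-2)/2` and `v_n(θ) = cos^{2n}(θ/2)/I_{n,d}`. -/
theorem vallee_poussin_neg_lambda_moment (d : ℕ) (hd : 3 ≤ d) :
    ∃ C > (0:ℝ), ∀ n : ℕ, 1 ≤ n →
      (∫ θ in (0:ℝ)..π,
          θ ^ (-(((d:ℝ) - 2)/2)) *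
            (Real.cos (θ/2) ^ (2*n) /
              ∫ t in (0:ℝ)..π, Real.cos (t/2) ^ (2*n) * Real.sin t ^ (d - 2)) *
            Real.sin θ ^ (d - 2)) ≤
        C * (n:ℝ) ^ ((((d:ℝ) - 2)/2)/2) := by
  obtain ⟨k, rfl⟩ : ∃ k, d = k + 2 := ⟨d - 2, by omega⟩
  have hl : (((k + 2 : ℕ) : ℝ) - 2) / 2 = (k : ℝ) / 2 := by push_cast; ring
  simp only [hl, Nat.add_sub_cancel]
  set K := π ^ 2 / 2 / (3 / 4 * (2 / π) ^ k / (k + 1))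
  refine ⟨(1 + K) / 2, by positivity, fun n hn => ?_⟩
  set I := ∫ t in (0:ℝ)..π, cos (t / 2) ^ (2 * n) * sin t ^ k
  set p := (n : ℝ) ^ ((k : ℝ) / 2 / 2)
  have hp : 0 < p := by positivity
  have hI : 0 < I := integral_cos_half_pow_mul_sin_pow_pos k hn
  have hp2 : p ^ 2 = √n ^ k := by
    rw [sqrt_eq_rpow, ← rpow_natCast, ← rpow_mul (by positivity), ← rpow_natCast,
      ← rpow_mul (by positivity)]
    ring_nf
  calc ∫ θ in (0:ℝ)..π, θ ^ (-((k : ℝ) / 2)) * (cos (θ / 2) ^ (2 * n) / I) * sin θ ^ k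
      = (∫ θ in (0:ℝ)..π, θ ^ (-((k : ℝ) / 2)) * cos (θ / 2) ^ (2 * n) * sin θ ^ k) / I := by
        rw [← intervalIntegral.integral_div]
        congr 1 with θ
        ring
    _ ≤ (p * I + p⁻¹ * ∫ t in (0:ℝ)..π, cos (t / 2) ^ (2 * n)) / 2 / I := by
        gcongr
        exact integral_rpow_neg_mul_mul_sin_pow_le (by fun_prop)
          (fun θ _ => (even_two_mul n).pow_nonneg _) k hp
    _ ≤ (p * I + p⁻¹ * (K * p ^ 2 * I)) / 2 / I := by
        gcongr
        rw [hp2]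
        exact integral_cos_half_pow_le_mul_integral_mul_sin_pow k hn
    _ = (1 + K) / 2 * p := by field_simp
end

section
/- For every integer d ≥ 3 there is a constant C(d) > 0 such that for all n ≥ 1, ∫₀^π θ^4 v_n(θ) (sin θ)^{2λ} dθ ≤ C(d) n^{−2}, where λ = (d−2)/2 and v_n(θ) = (cos(θ/2))^{2n}/I_{n,d}. -/
/-!
With `e = d - 2` and `K(p, q) = ∫₀^π sin^p(θ/2) cos^q(θ/2) dθ`, the identity
`sin θ = 2 sin(θ/2) cos(θ/2)` and Jordan's bound `θ ≤ π sin(θ/2)` on `[0, π]` bound the numerator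
by `π⁴ 2^e K(e+4, 2n+e)` and turn the normalisation into `2^e K(e, 2n+e)`. Integrating
`(sin^{p+1} cos^{q+1})(θ/2)` by parts gives `(p+q+2) K(p+2, q) = (p+1) K(p, q)`, so raising the
sine exponent by four costs a factor `(p+1)(p+3) / ((p+q+2)(p+q+4)) ≤ (e+1)(e+3) / (4n²)`.
-/

open Real

noncomputable def halfAngleMoment (p q : ℕ) : ℝ :=
  ∫ θ in (0:ℝ)..π, sin (θ / 2) ^ p * cos (θ / 2) ^ q

lemma continuous_sin_half_pow_mul_cos_half_pow (p q : ℕ) :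
    Continuous fun θ : ℝ => sin (θ / 2) ^ p * cos (θ / 2) ^ q := by
  fun_prop

lemma halfAngleMoment_pos (p q : ℕ) : 0 < halfAngleMoment p q := by
  refine intervalIntegral.intervalIntegral_pos_of_pos_on
    ((continuous_sin_half_pow_mul_cos_half_pow p q).intervalIntegrable 0 π) (fun x hx => ?_) pi_pos
  obtain ⟨h₀, hπ⟩ := hx
  have hsin : 0 < sin (x / 2) := sin_pos_of_pos_of_lt_pi (by linarith) (by linarith)
  have hcos : 0 < cos (x / 2) := cos_pos_of_mem_Ioo ⟨by linarith, by linarith⟩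
  positivity

lemma hasDerivAt_sin_half_pow_mul_cos_half_pow (p q : ℕ) (x : ℝ) :
    HasDerivAt (fun θ => sin (θ / 2) ^ (p + 1) * cos (θ / 2) ^ (q + 1))
      ((p + 1) / 2 * (sin (x / 2) ^ p * cos (x / 2) ^ (q + 2))
        - (q + 1) / 2 * (sin (x / 2) ^ (p + 2) * cos (x / 2) ^ q)) x := by
  have hhalf : HasDerivAt (fun θ : ℝ => θ / 2) (1 / 2) x := by
    simpa using (hasDerivAt_id x).div_const 2
  have h : HasDerivAt (fun θ => sin (θ / 2) ^ (p + 1) * cos (θ / 2) ^ (q + 1)) _ x :=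
    (hhalf.sin.pow (p + 1)).mul (hhalf.cos.pow (q + 1))
  convert h using 1
  simp only [Nat.add_sub_cancel, Pi.pow_apply]
  push_cast
  ring

lemma halfAngleMoment_integration_by_parts (p q : ℕ) :
    (p + 1) * halfAngleMoment p (q + 2) = (q + 1) * halfAngleMoment (p + 2) q := by
  have hint (a b : ℕ) (c : ℝ) : IntervalIntegrable
      (fun θ => c * (sin (θ / 2) ^ a * cos (θ / 2) ^ b)) MeasureTheory.volume 0 π :=
    (continuous_const.mul (continuous_sin_half_pow_mul_cos_half_pow a b)).intervalIntegrable 0 π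
  have hzero := intervalIntegral.integral_eq_sub_of_hasDerivAt
    (fun x _ => hasDerivAt_sin_half_pow_mul_cos_half_pow p q x) ((hint _ _ _).sub (hint _ _ _))
  simp only [intervalIntegral.integral_sub (hint _ _ _) (hint _ _ _),
    intervalIntegral.integral_const_mul, cos_pi_div_two, zero_div, sin_zero] at hzero
  unfold halfAngleMoment
  linear_combination 2 * hzero

lemma halfAngleMoment_add_two_cos (p q : ℕ) :
    halfAngleMoment p (q + 2) = halfAngleMoment p q - halfAngleMoment (p + 2) q := by
  have hcont := continuous_sin_half_pow_mul_cos_half_pow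
  unfold halfAngleMoment
  rw [← intervalIntegral.integral_sub ((hcont p q).intervalIntegrable 0 π)
    ((hcont (p + 2) q).intervalIntegrable 0 π)]
  refine intervalIntegral.integral_congr fun θ _ => ?_
  simp only [pow_add, cos_sq']
  ring

lemma halfAngleMoment_add_two (p q : ℕ) :
    (p + q + 2) * halfAngleMoment (p + 2) q = (p + 1) * halfAngleMoment p q := by
  have h := halfAngleMoment_integration_by_parts p q
  rw [halfAngleMoment_add_two_cos] at h
  linear_combination -h

lemma halfAngleMoment_add_four (p q : ℕ) :
    (p + q + 4) * (p + q + 2) * halfAngleMoment (p + 4) q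
      = (p + 3) * (p + 1) * halfAngleMoment p q := by
  have h₂ := halfAngleMoment_add_two (p + 2) q
  have h₀ := halfAngleMoment_add_two p q
  push_cast at h₂
  linear_combination (p + q + 2 : ℝ) * h₂ + (p + 3 : ℝ) * h₀

lemma sin_eq_two_mul_sin_half_mul_cos_half (θ : ℝ) : sin θ = 2 * sin (θ / 2) * cos (θ / 2) := by
  rw [← sin_two_mul, mul_div_cancel₀ _ two_ne_zero]

lemma integral_cos_half_pow_mul_sin_pow (m e : ℕ) :
    ∫ t in (0:ℝ)..π, cos (t / 2) ^ m * sin t ^ e = 2 ^ e * halfAngleMoment e (m + e) := by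
  rw [halfAngleMoment, ← intervalIntegral.integral_const_mul]
  refine intervalIntegral.integral_congr fun t _ => ?_
  rw [sin_eq_two_mul_sin_half_mul_cos_half t]
  ring

lemma self_le_pi_mul_sin_half {θ : ℝ} (h₀ : 0 ≤ θ) (hπ : θ ≤ π) : θ ≤ π * sin (θ / 2) := by
  have h := mul_le_mul_of_nonneg_left (mul_le_sin (x := θ / 2) (by linarith) (by linarith))
    pi_pos.le
  rwa [← mul_assoc, mul_div_cancel₀ _ pi_ne_zero, mul_div_cancel₀ _ two_ne_zero] at h

lemma integral_pow_four_mul_cos_half_pow_mul_sin_pow_le (m e : ℕ) :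
    ∫ θ in (0:ℝ)..π, θ ^ 4 * cos (θ / 2) ^ m * sin θ ^ e
      ≤ π ^ 4 * 2 ^ e * halfAngleMoment (e + 4) (m + e) := by
  rw [halfAngleMoment, ← intervalIntegral.integral_const_mul]
  refine intervalIntegral.integral_mono_on pi_pos.le
    (Continuous.intervalIntegrable (by fun_prop) 0 π)
    (Continuous.intervalIntegrable (by fun_prop) 0 π) fun θ ⟨h₀, hπ⟩ => ?_
  have hsin : 0 ≤ sin (θ / 2) := sin_nonneg_of_nonneg_of_le_pi (by linarith) (by linarith)
  have hcos : 0 ≤ cos (θ / 2) := cos_nonneg_of_mem_Icc ⟨by linarith, by linarith⟩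
  have h4 : θ ^ 4 ≤ (π * sin (θ / 2)) ^ 4 :=
    pow_le_pow_left₀ h₀ (self_le_pi_mul_sin_half h₀ hπ) 4
  calc θ ^ 4 * cos (θ / 2) ^ m * sin θ ^ e
      = θ ^ 4 * (2 ^ e * sin (θ / 2) ^ e * cos (θ / 2) ^ (m + e)) := by
        rw [sin_eq_two_mul_sin_half_mul_cos_half θ]
        ring
    _ ≤ (π * sin (θ / 2)) ^ 4 * (2 ^ e * sin (θ / 2) ^ e * cos (θ / 2) ^ (m + e)) := by
        gcongr
    _ = π ^ 4 * 2 ^ e * (sin (θ / 2) ^ (e + 4) * cos (θ / 2) ^ (m + e)) := by ring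

lemma four_mul_sq_mul_halfAngleMoment_add_four_le (n e : ℕ) :
    4 * (n : ℝ) ^ 2 * halfAngleMoment (e + 4) (2 * n + e)
      ≤ (e + 3) * (e + 1) * halfAngleMoment e (2 * n + e) := by
  rw [← halfAngleMoment_add_four]
  have hK := (halfAngleMoment_pos (e + 4) (2 * n + e)).le
  refine mul_le_mul_of_nonneg_right ?_ hK
  push_cast
  nlinarith [(Nat.cast_nonneg n : (0:ℝ) ≤ n), (Nat.cast_nonneg e : (0:ℝ) ≤ e)]

theorem vallee_poussin_fourth_moment_general (d : ℕ) :
    ∃ C > (0:ℝ), ∀ n : ℕ, 1 ≤ n →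
      (∫ θ in (0:ℝ)..π,
          θ ^ 4 *
            (Real.cos (θ/2) ^ (2*n) /
              ∫ t in (0:ℝ)..π, Real.cos (t/2) ^ (2*n) * Real.sin t ^ (d - 2)) *
            Real.sin θ ^ (d - 2)) ≤
        C / (n:ℝ) ^ 2 := by
  set e := d - 2
  refine ⟨π ^ 4 * (e + 3) * (e + 1) / 4, by positivity, fun n hn => ?_⟩
  have hK := halfAngleMoment_pos e (2 * n + e)
  have hn2 : (0:ℝ) < (n:ℝ) ^ 2 := by positivity
  rw [integral_cos_half_pow_mul_sin_pow]
  simp_rw [mul_div_assoc', div_mul_eq_mul_div]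
  rw [intervalIntegral.integral_div, div_le_div_iff₀ (by positivity) hn2]
  calc (∫ θ in (0:ℝ)..π, θ ^ 4 * cos (θ / 2) ^ (2 * n) * sin θ ^ e) * n ^ 2
      ≤ π ^ 4 * 2 ^ e * halfAngleMoment (e + 4) (2 * n + e) * n ^ 2 := by
        gcongr
        exact integral_pow_four_mul_cos_half_pow_mul_sin_pow_le _ _
    _ = π ^ 4 * 2 ^ e / 4 * (4 * n ^ 2 * halfAngleMoment (e + 4) (2 * n + e)) := by ring
    _ ≤ π ^ 4 * 2 ^ e / 4 * ((e + 3) * (e + 1) * halfAngleMoment e (2 * n + e)) := by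
        have := four_mul_sq_mul_halfAngleMoment_add_four_le n e
        gcongr
    _ = π ^ 4 * (e + 3) * (e + 1) / 4 * (2 ^ e * halfAngleMoment e (2 * n + e)) := by ring

/-- Lemma 2.2: `∫₀^π θ^4 v_n(θ) sin^{2λ} θ dθ ≤ C(d) n^{-2}`. -/
theorem vallee_poussin_fourth_moment (d : ℕ) (hd : 3 ≤ d) :
    ∃ C > (0:ℝ), ∀ n : ℕ, 1 ≤ n →
      (∫ θ in (0:ℝ)..π,
          θ ^ 4 *
            (Real.cos (θ/2) ^ (2*n) /
              ∫ t in (0:ℝ)..π, Real.cos (t/2) ^ (2*n) * Real.sin t ^ (d - 2)) *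
            Real.sin θ ^ (d - 2)) ≤
        C / (n:ℝ) ^ 2 :=
  vallee_poussin_fourth_moment_general d
end

section
/- For integers n ≥ 1, d ≥ 3 with λ = (d−2)/2, define α(n) := ∫₀^π v_n(θ)(sin θ)^{2λ} (∫₀^θ (sin t)^{−2λ} ∫₀^t (sin u)^{2λ} du dt) dθ. Then there exist constants A, B > 0 depending only on d such that A/n ≤ α(n) ≤ B/n for all n ≥ 1. -/
/-!
Write `p = d - 2`, `I_n = ∫₀^π cos(θ/2)^{2n} sin^p θ dθ` and `F` for the inner double integral,
so that `α(n) = J_n / I_n` with `J_n = ∫₀^π cos(θ/2)^{2n} sin^p θ F(θ) dθ`.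

Both are moments of the kernel `cos(θ/2)^{2n}` against weights comparable to a power of `θ`.
Since `sin θ / θ` decreases on `(0, π]` (concavity of `sin`), `sin^p θ F(θ) ≤ θ^{p+2} / (2(p+1))`
on `[0, π)`, and it is at least a constant times `θ^{p+2}` on `[0, 1]`; similarly `sin^p θ ≍ θ^p`.
For a weight `φ ≍ θ^k` the moment is `≍ n^{-(k+1)/2}`: from above, `cos(θ/2)^{2n} ≤ exp(-nθ²/π²)`
and the Gaussian moment is a Gamma value; from below, `cos(θ/2)^{2n} ≥ 3/4` on `[0, n^{-1/2}]`.
Hence `J_n ≍ n^{-(p+3)/2}`, `I_n ≍ n^{-(p+1)/2}` and `α(n) ≍ 1/n`.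
-/

open Real MeasureTheory Set

namespace Voronovskaya

variable {p : ℕ} {t θ : ℝ}

theorem sin_mul_le_mul_sin (ht : 0 ≤ t) (htθ : t ≤ θ) (hθ : θ ≤ π) :
    sin θ * t ≤ θ * sin t := by
  rcases ht.eq_or_lt with rfl | ht
  · simp
  have hθ0 : 0 < θ := ht.trans_le htθ
  have key := strictConcaveOn_sin_Icc.concaveOn.2 (⟨hθ0.le, hθ⟩ : θ ∈ Icc 0 π)
    (⟨le_rfl, pi_pos.le⟩ : (0:ℝ) ∈ Icc 0 π) (by positivity : 0 ≤ t / θ)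
    (by rw [sub_nonneg, div_le_one hθ0]; exact htθ : 0 ≤ 1 - t / θ) (by ring)
  simp only [smul_eq_mul, mul_zero, add_zero, sin_zero, div_mul_cancel₀ t hθ0.ne'] at key
  rw [div_mul_eq_mul_div, div_le_iff₀ hθ0] at key
  linarith

theorem sin_pow_le_pow (hθ : 0 ≤ θ) (hθπ : θ ≤ π) : sin θ ^ p ≤ θ ^ p :=
  pow_le_pow_left₀ (sin_nonneg_of_nonneg_of_le_pi hθ hθπ) (sin_le hθ) p

theorem two_div_pi_mul_pow_le_sin_pow (hθ : 0 ≤ θ) (hθπ : θ ≤ π / 2) :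
    (2 / π * θ) ^ p ≤ sin θ ^ p :=
  pow_le_pow_left₀ (mul_nonneg (by positivity) hθ) (mul_le_sin hθ hθπ) p

noncomputable def sinPowPrimitive (p : ℕ) (t : ℝ) : ℝ := ∫ u in (0:ℝ)..t, sin u ^ p

noncomputable def sinPowQuot (p : ℕ) (t : ℝ) : ℝ := sin t ^ (-(p:ℝ)) * sinPowPrimitive p t

/-- With `p = d - 2`, this is the inverse of the radial Laplacian `sin⁻ᵖ (sinᵖ F')'` on the
sphere applied to the constant `1`, normalised by `F 0 = F' 0 = 0`. -/
noncomputable def radialPotential (p : ℕ) (θ : ℝ) : ℝ := ∫ t in (0:ℝ)..θ, sinPowQuot p t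

theorem sinPowPrimitive_nonneg (ht : 0 ≤ t) (htπ : t ≤ π) : 0 ≤ sinPowPrimitive p t :=
  intervalIntegral.integral_nonneg ht fun _ hu =>
    pow_nonneg (sin_nonneg_of_nonneg_of_le_pi hu.1 (hu.2.trans htπ)) p

theorem sinPowPrimitive_le (ht : 0 ≤ t) (htπ : t ≤ π) :
    sinPowPrimitive p t ≤ t ^ (p + 1) / (p + 1) := by
  calc sinPowPrimitive p t ≤ ∫ u in (0:ℝ)..t, u ^ p :=
        intervalIntegral.integral_mono_on ht ((continuous_sin.pow p).intervalIntegrable 0 t)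
          ((continuous_pow p).intervalIntegrable 0 t) fun u hu =>
            sin_pow_le_pow hu.1 (hu.2.trans htπ)
    _ = t ^ (p + 1) / (p + 1) := by simp [integral_pow]

theorem le_sinPowPrimitive (ht : 0 ≤ t) (htπ : t ≤ π / 2) :
    (2 / π) ^ p * t ^ (p + 1) / (p + 1) ≤ sinPowPrimitive p t := by
  calc (2 / π) ^ p * t ^ (p + 1) / (p + 1) = ∫ u in (0:ℝ)..t, (2 / π * u) ^ p := by
        simp [mul_pow, integral_pow, mul_div_assoc]
    _ ≤ sinPowPrimitive p t :=
        intervalIntegral.integral_mono_on ht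
          ((by fun_prop : Continuous _).intervalIntegrable 0 t)
          ((continuous_sin.pow p).intervalIntegrable 0 t) fun u hu =>
            two_div_pi_mul_pow_le_sin_pow hu.1 (hu.2.trans htπ)

theorem sinPowQuot_eq_div (ht : 0 ≤ t) (htπ : t ≤ π) :
    sinPowQuot p t = sinPowPrimitive p t / sin t ^ p := by
  rw [sinPowQuot, rpow_neg (sin_nonneg_of_nonneg_of_le_pi ht htπ), rpow_natCast, inv_mul_eq_div]

theorem sinPowQuot_nonneg (ht : 0 ≤ t) (htπ : t ≤ π) : 0 ≤ sinPowQuot p t := by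
  rw [sinPowQuot_eq_div ht htπ]
  exact div_nonneg (sinPowPrimitive_nonneg ht htπ)
    (pow_nonneg (sin_nonneg_of_nonneg_of_le_pi ht htπ) p)

theorem sin_pow_mul_sinPowQuot_le (ht : 0 ≤ t) (htθ : t ≤ θ) (hθ : θ < π) :
    sin θ ^ p * sinPowQuot p t ≤ θ ^ p * t / (p + 1) := by
  rcases ht.eq_or_lt with rfl | ht
  · simp [sinPowQuot, sinPowPrimitive]
  have hsin_t : 0 < sin t := sin_pos_of_pos_of_lt_pi ht (htθ.trans_lt hθ)
  have hsin_θ : 0 ≤ sin θ := sin_nonneg_of_nonneg_of_le_pi (ht.le.trans htθ) hθ.le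
  have hchord : (sin θ * t) ^ p ≤ (θ * sin t) ^ p :=
    pow_le_pow_left₀ (by positivity) (sin_mul_le_mul_sin ht.le htθ hθ.le) p
  rw [sinPowQuot_eq_div ht.le (htθ.trans hθ.le), mul_div_assoc', div_le_iff₀ (by positivity)]
  calc sin θ ^ p * sinPowPrimitive p t ≤ sin θ ^ p * (t ^ (p + 1) / (p + 1)) :=
        mul_le_mul_of_nonneg_left (sinPowPrimitive_le ht.le (htθ.trans hθ.le)) (by positivity)
    _ = (sin θ * t) ^ p * t / (p + 1) := by ring
    _ ≤ (θ * sin t) ^ p * t / (p + 1) := by gcongr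
    _ = θ ^ p * t / (p + 1) * sin t ^ p := by ring

theorem le_sinPowQuot (ht : 0 ≤ t) (ht1 : t ≤ 1) :
    (2 / π) ^ p * t / (p + 1) ≤ sinPowQuot p t := by
  rcases ht.eq_or_lt with rfl | ht
  · simp [sinPowQuot, sinPowPrimitive]
  have htπ : t ≤ π / 2 := ht1.trans (by linarith [pi_gt_three])
  have hsin_t : 0 < sin t := sin_pos_of_pos_of_lt_pi ht (by linarith [pi_pos])
  rw [sinPowQuot_eq_div ht.le (by linarith), le_div_iff₀ (by positivity)]
  calc (2 / π) ^ p * t / (p + 1) * sin t ^ p ≤ (2 / π) ^ p * t / (p + 1) * t ^ p := by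
        gcongr
        exact sin_le ht.le
    _ = (2 / π) ^ p * t ^ (p + 1) / (p + 1) := by ring
    _ ≤ sinPowPrimitive p t := le_sinPowPrimitive ht.le htπ

theorem measurable_sinPowQuot : Measurable (sinPowQuot p) :=
  (continuous_sin.measurable.pow_const _).mul
    (intervalIntegral.continuous_primitive
      (fun a b => (continuous_sin.pow p).intervalIntegrable a b) 0).measurable

theorem intervalIntegrable_sinPowQuot (hθ0 : 0 ≤ θ) (hθ : θ < π) :
    IntervalIntegrable (sinPowQuot p) volume 0 θ := by
  rcases hθ0.eq_or_lt with rfl | hθ0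
  · exact IntervalIntegrable.refl
  have hsin : 0 < sin θ := sin_pos_of_pos_of_lt_pi hθ0 hθ
  refine IntervalIntegrable.mono_fun' (g := fun t => θ ^ p * t / (p + 1) / sin θ ^ p)
    ((by fun_prop : Continuous _).intervalIntegrable _ _)
    measurable_sinPowQuot.aestronglyMeasurable ?_
  rw [uIoc_of_le hθ0.le]
  filter_upwards [ae_restrict_mem measurableSet_Ioc] with t ht
  rw [norm_of_nonneg (sinPowQuot_nonneg ht.1.le (ht.2.trans hθ.le)),
    le_div_iff₀ (by positivity), mul_comm]
  exact sin_pow_mul_sinPowQuot_le ht.1.le ht.2 hθ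

theorem radialPotential_nonneg (hθ : 0 ≤ θ) (hθπ : θ ≤ π) : 0 ≤ radialPotential p θ :=
  intervalIntegral.integral_nonneg hθ fun _ ht => sinPowQuot_nonneg ht.1 (ht.2.trans hθπ)

theorem monotoneOn_radialPotential : MonotoneOn (radialPotential p) (Ico 0 π) :=
  fun _ ha _ hb hab => intervalIntegral.integral_mono_interval le_rfl ha.1 hab
    ((ae_restrict_mem measurableSet_Ioc).mono fun _ ht =>
      sinPowQuot_nonneg ht.1.le (ht.2.trans hb.2.le))
    (intervalIntegrable_sinPowQuot hb.1 hb.2)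

theorem sin_pow_mul_radialPotential_le (hθ : 0 ≤ θ) (hθπ : θ < π) :
    sin θ ^ p * radialPotential p θ ≤ θ ^ (p + 2) / (2 * (p + 1)) := by
  calc sin θ ^ p * radialPotential p θ = ∫ t in (0:ℝ)..θ, sin θ ^ p * sinPowQuot p t :=
        (intervalIntegral.integral_const_mul _ _).symm
    _ ≤ ∫ t in (0:ℝ)..θ, θ ^ p * t / (p + 1) :=
        intervalIntegral.integral_mono_on hθ ((intervalIntegrable_sinPowQuot hθ hθπ).const_mul _)
          ((by fun_prop : Continuous _).intervalIntegrable _ _)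
          fun t ht => sin_pow_mul_sinPowQuot_le ht.1 ht.2 hθπ
    _ = θ ^ (p + 2) / (2 * (p + 1)) := by
        simp only [mul_div_assoc, intervalIntegral.integral_const_mul,
          intervalIntegral.integral_div, integral_id]
        field_simp
        ring

theorem le_radialPotential (hθ : 0 ≤ θ) (hθ1 : θ ≤ 1) :
    (2 / π) ^ p * θ ^ 2 / (2 * (p + 1)) ≤ radialPotential p θ := by
  calc (2 / π) ^ p * θ ^ 2 / (2 * (p + 1)) = ∫ t in (0:ℝ)..θ, (2 / π) ^ p * t / (p + 1) := by
        simp only [mul_div_assoc, intervalIntegral.integral_const_mul,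
          intervalIntegral.integral_div, integral_id]
        field_simp
        ring
    _ ≤ radialPotential p θ :=
        intervalIntegral.integral_mono_on hθ ((by fun_prop : Continuous _).intervalIntegrable _ _)
          (intervalIntegrable_sinPowQuot hθ (hθ1.trans_lt (by linarith [pi_gt_three])))
          fun t ht => le_sinPowQuot ht.1 (ht.2.trans hθ1)

theorem le_sin_pow_mul_radialPotential (hθ : 0 ≤ θ) (hθ1 : θ ≤ 1) :
    (2 / π) ^ (2 * p) / (2 * (p + 1)) * θ ^ (p + 2) ≤ sin θ ^ p * radialPotential p θ := by
  have hsin : (2 / π) ^ p * θ ^ p ≤ sin θ ^ p := by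
    rw [← mul_pow]
    exact two_div_pi_mul_pow_le_sin_pow hθ (hθ1.trans (by linarith [pi_gt_three]))
  calc (2 / π) ^ (2 * p) / (2 * (p + 1)) * θ ^ (p + 2)
      = ((2 / π) ^ p * θ ^ p) * ((2 / π) ^ p * θ ^ 2 / (2 * (p + 1))) := by ring
    _ ≤ sin θ ^ p * radialPotential p θ :=
        mul_le_mul hsin (le_radialPotential hθ hθ1) (by positivity)
          (pow_nonneg (sin_nonneg_of_nonneg_of_le_pi hθ (by linarith [pi_gt_three])) p)

/- For `p ≥ 1`, `sinPowQuot p` is not integrable up to `π`, so `radialPotential p` is controlled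
only on `[0, π)`; its monotonicity there supplies the measurability. -/
theorem intervalIntegrable_sin_pow_mul_radialPotential :
    IntervalIntegrable (fun θ => sin θ ^ p * radialPotential p θ) volume 0 π := by
  rw [intervalIntegrable_iff_integrableOn_Ioo_of_le pi_pos.le]
  have hmeas : AEStronglyMeasurable (fun θ => sin θ ^ p * radialPotential p θ)
      (volume.restrict (Ioo 0 π)) :=
    (continuous_sin.pow p).aestronglyMeasurable.mul (aemeasurable_restrict_of_monotoneOn
      measurableSet_Ioo (monotoneOn_radialPotential.mono Ioo_subset_Ico_self)).aestronglyMeasurable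
  refine Integrable.mono' (integrableOn_const (C := π ^ (p + 2) / (2 * (p + 1)))
    measure_Ioo_lt_top.ne) hmeas ?_
  filter_upwards [ae_restrict_mem measurableSet_Ioo] with θ hθ
  rw [norm_of_nonneg (mul_nonneg (pow_nonneg (sin_nonneg_of_nonneg_of_le_pi hθ.1.le hθ.2.le) p)
    (radialPotential_nonneg hθ.1.le hθ.2.le))]
  exact (sin_pow_mul_radialPotential_le hθ.1.le hθ.2).trans
    (div_le_div_of_nonneg_right (pow_le_pow_left₀ hθ.1.le hθ.2.le _) (by positivity))

theorem cos_half_pow_le_exp (n : ℕ) (hθ : |θ| ≤ π) :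
    cos (θ / 2) ^ (2 * n) ≤ exp (-(n / π ^ 2) * θ ^ 2) := by
  obtain ⟨hθl, hθr⟩ := abs_le.1 hθ
  have hcos_nonneg : 0 ≤ cos (θ / 2) := cos_nonneg_of_mem_Icc ⟨by linarith, by linarith⟩
  have hcos : cos (θ / 2) ≤ exp (-(θ ^ 2 / (2 * π ^ 2))) :=
    calc cos (θ / 2) ≤ 1 - 2 / π ^ 2 * (θ / 2) ^ 2 :=
          cos_le_one_sub_mul_cos_sq (by rw [abs_div, abs_two]; linarith [pi_pos])
      _ = -(θ ^ 2 / (2 * π ^ 2)) + 1 := by ring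
      _ ≤ exp (-(θ ^ 2 / (2 * π ^ 2))) := add_one_le_exp _
  calc cos (θ / 2) ^ (2 * n) ≤ exp (-(θ ^ 2 / (2 * π ^ 2))) ^ (2 * n) :=
        pow_le_pow_left₀ hcos_nonneg hcos _
    _ = exp (-(n / π ^ 2) * θ ^ 2) := by
        rw [← exp_nat_mul]
        push_cast
        field_simp

theorem three_quarters_le_cos_half_pow {n : ℕ} (hθ : n * θ ^ 2 ≤ 1) :
    3 / 4 ≤ cos (θ / 2) ^ (2 * n) := by
  rcases n.eq_zero_or_pos with rfl | hn
  · norm_num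
  have hn' : (1:ℝ) ≤ n := by exact_mod_cast hn
  have hθ1 : θ ^ 2 ≤ 1 := by nlinarith [sq_nonneg θ]
  have hcos : 1 + -(θ ^ 2 / 8) ≤ cos (θ / 2) := by
    linarith [one_sub_sq_div_two_le_cos (x := θ / 2)]
  calc (3 / 4 : ℝ) ≤ 1 + ((2 * n : ℕ) : ℝ) * -(θ ^ 2 / 8) := by push_cast; linarith
    _ ≤ (1 + -(θ ^ 2 / 8)) ^ (2 * n) := one_add_mul_le_pow (by linarith) _
    _ ≤ cos (θ / 2) ^ (2 * n) := pow_le_pow_left₀ (by linarith) hcos _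

theorem integral_cos_half_pow_mul_pow_le (k : ℕ) {n : ℕ} (hn : 0 < n) :
    ∫ θ in (0:ℝ)..π, cos (θ / 2) ^ (2 * n) * θ ^ k
      ≤ (n / π ^ 2) ^ (-((k:ℝ) + 1) / 2) * Gamma ((k + 1) / 2) / 2 := by
  have hb : 0 < (n:ℝ) / π ^ 2 := by positivity
  have hk : (-1:ℝ) < k := by linarith [(Nat.cast_nonneg k : (0:ℝ) ≤ k)]
  have hgauss := integral_rpow_mul_exp_neg_mul_rpow two_pos hk hb
  have hint := integrableOn_rpow_mul_exp_neg_mul_rpow hk two_pos hb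
  simp only [rpow_natCast, rpow_ofNat] at hgauss hint
  calc ∫ θ in (0:ℝ)..π, cos (θ / 2) ^ (2 * n) * θ ^ k
      ≤ ∫ θ in (0:ℝ)..π, θ ^ k * exp (-(n / π ^ 2) * θ ^ 2) := by
        refine intervalIntegral.integral_mono_on pi_pos.le
          ((by fun_prop : Continuous _).intervalIntegrable _ _)
          ((by fun_prop : Continuous _).intervalIntegrable _ _) fun θ hθ => ?_
        rw [mul_comm]
        exact mul_le_mul_of_nonneg_left
          (cos_half_pow_le_exp n (abs_le.2 ⟨by linarith [hθ.1, pi_pos], hθ.2⟩)) (pow_nonneg hθ.1 k)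
    _ ≤ ∫ θ in Ioi 0, θ ^ k * exp (-(n / π ^ 2) * θ ^ 2) := by
        rw [intervalIntegral.integral_of_le pi_pos.le]
        refine setIntegral_mono_set hint ?_ Ioc_subset_Ioi_self.eventuallyLE
        filter_upwards [ae_restrict_mem measurableSet_Ioi] with θ hθ
        exact mul_nonneg (pow_nonneg (le_of_lt hθ) k) (exp_nonneg _)
    _ = (n / π ^ 2) ^ (-((k:ℝ) + 1) / 2) * Gamma ((k + 1) / 2) / 2 := by
        rw [hgauss]
        ring

section WeightedIntegral

variable {φ : ℝ → ℝ} {k n : ℕ}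

theorem integral_cos_half_pow_mul_le {C : ℝ} (hC : 0 ≤ C) (hφ : IntervalIntegrable φ volume 0 π)
    (hφ_le : ∀ θ ∈ Ioo 0 π, φ θ ≤ C * θ ^ k) (hn : 0 < n) :
    ∫ θ in (0:ℝ)..π, cos (θ / 2) ^ (2 * n) * φ θ
      ≤ C * (Gamma ((k + 1) / 2) / 2 / (π ^ 2) ^ (-((k:ℝ) + 1) / 2)) *
        (n:ℝ) ^ (-((k:ℝ) + 1) / 2) := by
  calc ∫ θ in (0:ℝ)..π, cos (θ / 2) ^ (2 * n) * φ θ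
      ≤ ∫ θ in (0:ℝ)..π, C * (cos (θ / 2) ^ (2 * n) * θ ^ k) := by
        refine intervalIntegral.integral_mono_on_of_le_Ioo pi_pos.le
          (hφ.continuousOn_mul (by fun_prop))
          ((by fun_prop : Continuous _).intervalIntegrable _ _) fun θ hθ => ?_
        rw [mul_left_comm]
        exact mul_le_mul_of_nonneg_left (hφ_le θ hθ) ((even_two_mul n).pow_nonneg _)
    _ ≤ C * ((n / π ^ 2) ^ (-((k:ℝ) + 1) / 2) * Gamma ((k + 1) / 2) / 2) := by
        rw [intervalIntegral.integral_const_mul]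
        exact mul_le_mul_of_nonneg_left (integral_cos_half_pow_mul_pow_le k hn) hC
    _ = _ := by
        rw [div_rpow (Nat.cast_nonneg n) (by positivity)]
        ring

theorem le_integral_cos_half_pow_mul {c : ℝ} (hc : 0 ≤ c) (hφ : IntervalIntegrable φ volume 0 π)
    (hφ_nonneg : ∀ θ ∈ Icc 0 π, 0 ≤ φ θ) (hφ_ge : ∀ θ ∈ Icc 0 1, c * θ ^ k ≤ φ θ) (hn : 1 ≤ n) :
    3 * c / (4 * (k + 1)) * (n:ℝ) ^ (-((k:ℝ) + 1) / 2)
      ≤ ∫ θ in (0:ℝ)..π, cos (θ / 2) ^ (2 * n) * φ θ := by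
  have hn0 : (0:ℝ) < n := by exact_mod_cast hn
  set a : ℝ := (n:ℝ) ^ (-(1:ℝ) / 2) with ha
  have ha0 : 0 < a := by positivity
  have ha_pow (m : ℕ) : a ^ m = (n:ℝ) ^ (-(m:ℝ) / 2) := by
    rw [ha, ← rpow_natCast, ← rpow_mul hn0.le]
    ring_nf
  have ha1 : a ≤ 1 := rpow_le_one_of_one_le_of_nonpos (by exact_mod_cast hn) (by norm_num)
  have haπ : a ≤ π := ha1.trans (by linarith [pi_gt_three])
  have hna : n * a ^ 2 = 1 := by
    rw [ha_pow, Nat.cast_two, neg_div_self two_ne_zero, rpow_neg_one, mul_inv_cancel₀ hn0.ne']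
  calc 3 * c / (4 * (k + 1)) * (n:ℝ) ^ (-((k:ℝ) + 1) / 2)
      = ∫ θ in (0:ℝ)..a, 3 / 4 * c * θ ^ k := by
        rw [intervalIntegral.integral_const_mul, integral_pow, ha_pow, zero_pow k.succ_ne_zero,
          sub_zero]
        push_cast
        field_simp
    _ ≤ ∫ θ in (0:ℝ)..a, cos (θ / 2) ^ (2 * n) * φ θ := by
        refine intervalIntegral.integral_mono_on ha0.le
          ((by fun_prop : Continuous _).intervalIntegrable _ _)
          ((hφ.mono_set ?_).continuousOn_mul (by fun_prop)) fun θ hθ => ?_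
        · rw [uIcc_of_le ha0.le, uIcc_of_le pi_pos.le]
          exact Icc_subset_Icc_right haπ
        have hθ2 : n * θ ^ 2 ≤ 1 := hna ▸ by gcongr; exacts [hθ.1, hθ.2]
        calc 3 / 4 * c * θ ^ k = 3 / 4 * (c * θ ^ k) := by ring
          _ ≤ cos (θ / 2) ^ (2 * n) * φ θ :=
              mul_le_mul (three_quarters_le_cos_half_pow hθ2) (hφ_ge θ ⟨hθ.1, hθ.2.trans ha1⟩)
                (mul_nonneg hc (pow_nonneg hθ.1 k)) ((even_two_mul n).pow_nonneg _)
    _ ≤ ∫ θ in (0:ℝ)..π, cos (θ / 2) ^ (2 * n) * φ θ := by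
        refine intervalIntegral.integral_mono_interval le_rfl ha0.le haπ ?_
          (hφ.continuousOn_mul (by fun_prop))
        filter_upwards [ae_restrict_mem measurableSet_Ioc] with θ hθ
        exact mul_nonneg ((even_two_mul n).pow_nonneg _) (hφ_nonneg θ (Ioc_subset_Icc_self hθ))

theorem exists_bounds_integral_cos_half_pow_mul {c C : ℝ} (hc : 0 < c)
    (hφ : IntervalIntegrable φ volume 0 π) (hφ_nonneg : ∀ θ ∈ Icc 0 π, 0 ≤ φ θ)
    (hφ_le : ∀ θ ∈ Ioo 0 π, φ θ ≤ C * θ ^ k) (hφ_ge : ∀ θ ∈ Icc 0 1, c * θ ^ k ≤ φ θ) :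
    ∃ a > 0, ∃ b > 0, ∀ n : ℕ, 1 ≤ n →
      a * (n:ℝ) ^ (-((k:ℝ) + 1) / 2) ≤ ∫ θ in (0:ℝ)..π, cos (θ / 2) ^ (2 * n) * φ θ ∧
      ∫ θ in (0:ℝ)..π, cos (θ / 2) ^ (2 * n) * φ θ ≤ b * (n:ℝ) ^ (-((k:ℝ) + 1) / 2) := by
  have hcC : c ≤ C := by
    simpa using (hφ_ge 1 ⟨zero_le_one, le_rfl⟩).trans
      (hφ_le 1 ⟨one_pos, by linarith [pi_gt_three]⟩)
  have hC : 0 < C := hc.trans_le hcC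
  have hΓ : 0 < Gamma ((k + 1) / 2) := Gamma_pos_of_pos (by positivity)
  exact ⟨_, by positivity, _, by positivity, fun n hn =>
    ⟨le_integral_cos_half_pow_mul hc.le hφ hφ_nonneg hφ_ge hn,
      integral_cos_half_pow_mul_le hC.le hφ hφ_le hn⟩⟩

end WeightedIntegral

theorem exists_bounds_integral_cos_half_pow_mul_sin_pow (p : ℕ) :
    ∃ a > 0, ∃ b > 0, ∀ n : ℕ, 1 ≤ n →
      a * (n:ℝ) ^ (-((p:ℝ) + 1) / 2) ≤ ∫ θ in (0:ℝ)..π, cos (θ / 2) ^ (2 * n) * sin θ ^ p ∧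
      ∫ θ in (0:ℝ)..π, cos (θ / 2) ^ (2 * n) * sin θ ^ p ≤ b * (n:ℝ) ^ (-((p:ℝ) + 1) / 2) := by
  refine exists_bounds_integral_cos_half_pow_mul (c := (2 / π) ^ p) (C := 1) (by positivity)
    ((by fun_prop : Continuous _).intervalIntegrable _ _)
    (fun θ hθ => pow_nonneg (sin_nonneg_of_nonneg_of_le_pi hθ.1 hθ.2) p)
    (fun θ hθ => ?_) (fun θ hθ => ?_)
  · rw [one_mul]
    exact sin_pow_le_pow hθ.1.le hθ.2.le
  · rw [← mul_pow]
    exact two_div_pi_mul_pow_le_sin_pow hθ.1 (hθ.2.trans (by linarith [pi_gt_three]))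

theorem exists_bounds_integral_cos_half_pow_mul_sin_pow_mul_radialPotential (p : ℕ) :
    ∃ a > 0, ∃ b > 0, ∀ n : ℕ, 1 ≤ n →
      a * (n:ℝ) ^ (-((p:ℝ) + 3) / 2)
        ≤ ∫ θ in (0:ℝ)..π, cos (θ / 2) ^ (2 * n) * (sin θ ^ p * radialPotential p θ) ∧
      ∫ θ in (0:ℝ)..π, cos (θ / 2) ^ (2 * n) * (sin θ ^ p * radialPotential p θ)
        ≤ b * (n:ℝ) ^ (-((p:ℝ) + 3) / 2) := by
  have h := exists_bounds_integral_cos_half_pow_mul (k := p + 2)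
    (c := (2 / π) ^ (2 * p) / (2 * (p + 1))) (C := 1 / (2 * (p + 1))) (by positivity)
    intervalIntegrable_sin_pow_mul_radialPotential
    (fun θ hθ => mul_nonneg (pow_nonneg (sin_nonneg_of_nonneg_of_le_pi hθ.1 hθ.2) p)
      (radialPotential_nonneg hθ.1 hθ.2))
    (fun θ hθ => (sin_pow_mul_radialPotential_le hθ.1.le hθ.2).trans_eq (by ring))
    (fun θ hθ => le_sin_pow_mul_radialPotential hθ.1 hθ.2)
  have hexp : -(((p + 2 : ℕ) : ℝ) + 1) / 2 = -((p:ℝ) + 3) / 2 := by push_cast; ring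
  simpa only [hexp] using h

theorem voronovskaya_integral_eq_div (p n : ℕ) :
    ∫ θ in (0:ℝ)..π,
        (cos (θ / 2) ^ (2 * n) / ∫ s in (0:ℝ)..π, cos (s / 2) ^ (2 * n) * sin s ^ p) *
        sin θ ^ p * (∫ t in (0:ℝ)..θ, sin t ^ (-(p:ℝ)) * ∫ u in (0:ℝ)..t, sin u ^ p)
      = (∫ θ in (0:ℝ)..π, cos (θ / 2) ^ (2 * n) * (sin θ ^ p * radialPotential p θ)) /
          ∫ s in (0:ℝ)..π, cos (s / 2) ^ (2 * n) * sin s ^ p := by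
  rw [← intervalIntegral.integral_div]
  congr 1 with θ
  simp only [radialPotential, sinPowQuot, sinPowPrimitive]
  ring

end Voronovskaya

open Voronovskaya in
/-- The Voronovskaya coefficient `α(n)` satisfies `A/n ≤ α(n) ≤ B/n`. -/
theorem voronovskaya_coefficient_bounds (d : ℕ) (hd : 3 ≤ d) :
    ∃ A > (0:ℝ), ∃ B > (0:ℝ), ∀ n : ℕ, 1 ≤ n →
      A / (n:ℝ) ≤
        (∫ θ in (0:ℝ)..π,
          (Real.cos (θ/2) ^ (2*n) /
            ∫ s in (0:ℝ)..π, Real.cos (s/2) ^ (2*n) * Real.sin s ^ (d - 2)) *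
          Real.sin θ ^ (d - 2) *
          (∫ t in (0:ℝ)..θ, Real.sin t ^ (-((d:ℝ) - 2)) *
            ∫ u in (0:ℝ)..t, Real.sin u ^ (d - 2))) ∧
      (∫ θ in (0:ℝ)..π,
          (Real.cos (θ/2) ^ (2*n) /
            ∫ s in (0:ℝ)..π, Real.cos (s/2) ^ (2*n) * Real.sin s ^ (d - 2)) *
          Real.sin θ ^ (d - 2) *
          (∫ t in (0:ℝ)..θ, Real.sin t ^ (-((d:ℝ) - 2)) *
            ∫ u in (0:ℝ)..t, Real.sin u ^ (d - 2))) ≤ B / (n:ℝ) := by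
  set p := d - 2
  have hp : (d:ℝ) - 2 = p := by rw [Nat.cast_sub (by omega : 2 ≤ d)]; norm_num
  obtain ⟨aI, haI, bI, hbI, hI⟩ := exists_bounds_integral_cos_half_pow_mul_sin_pow p
  obtain ⟨aJ, haJ, bJ, hbJ, hJ⟩ :=
    exists_bounds_integral_cos_half_pow_mul_sin_pow_mul_radialPotential p
  refine ⟨aJ / bI, by positivity, bJ / aI, by positivity, fun n hn => ?_⟩
  rw [hp, voronovskaya_integral_eq_div]
  have hn0 : (0:ℝ) < n := by exact_mod_cast hn
  set y := (n:ℝ) ^ (-((p:ℝ) + 1) / 2)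
  have hy : 0 < y := by positivity
  have hJ_scale : (n:ℝ) ^ (-((p:ℝ) + 3) / 2) = y / n := by
    rw [← rpow_sub_one hn0.ne']
    ring_nf
  obtain ⟨hIl, hIu⟩ := hI n hn
  obtain ⟨hJl, hJu⟩ := hJ n hn
  rw [hJ_scale] at hJl hJu
  constructor
  · calc aJ / bI / n = aJ * (y / n) / (bI * y) := by field_simp
      _ ≤ _ := div_le_div₀ ((by positivity : 0 ≤ aJ * (y / n)).trans hJl) hJl
          ((mul_pos haI hy).trans_le hIl) hIu
  · calc _ ≤ bJ * (y / n) / (aI * y) := div_le_div₀ (by positivity) hJu (mul_pos haI hy) hIl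
      _ = bJ / aI / n := by field_simp
end
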